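/- arXiv:2208.02340 — 2 statements merged into one kernel-verified Lean document; each statement's English description precedes it below -/
import Mathlib

section
/- Let G be a graph of order n with at least one edge, and let H be a graph with root vertex v. If every OI2RD function of H of minimum weight γ_oir2(H) assigns ∅ to v, then γ_oir2(G ∘_v H) = n·γ_oir2(H) + β(G). -/
/-- `f` is an outer-independent 2-rainbow dominating function of `G`. -/
def IsOI2RD {V : Type*} (G : SimpleGraph V) (f : V → Finset (Fin 2)) : Prop :=
  (∀ v, f v = ∅ → ∀ c : Fin 2, ∃ u, G.Adj v u ∧ c ∈ f u) ∧
  (∀ u w, f u = ∅ → f w = ∅ → ¬ G.Adj u w)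

/-- The outer-independent 2-rainbow domination number of `G`. -/
noncomputable def oir2 {V : Type*} [Fintype V] (G : SimpleGraph V) : ℕ :=
  sInf {w | ∃ f : V → Finset (Fin 2), IsOI2RD G f ∧ w = ∑ v, (f v).card}

/-- The independence number `α(G)`. -/
noncomputable def alphaNum {V : Type*} [Fintype V] (G : SimpleGraph V) : ℕ :=
  sSup {k | ∃ s : Finset V, (∀ u ∈ s, ∀ w ∈ s, ¬ G.Adj u w) ∧ s.card = k}

/-- The vertex cover number `β(G)`. -/
noncomputable def betaNum {V : Type*} [Fintype V] (G : SimpleGraph V) : ℕ :=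
  sInf {k | ∃ s : Finset V, (∀ u w, G.Adj u w → u ∈ s ∨ w ∈ s) ∧ s.card = k}

/-- The rooted product `G ∘ᵥ H` with root `v : V(H)`: one copy of `H` for each
vertex of `G`, with the roots of the copies joined according to `G`. -/
def rootedProd {α β : Type*} (G : SimpleGraph α) (H : SimpleGraph β) (v : β) :
    SimpleGraph (α × β) where
  Adj x y := (x.1 = y.1 ∧ H.Adj x.2 y.2) ∨ (x.2 = v ∧ y.2 = v ∧ G.Adj x.1 y.1)
  symm := by
    refine ⟨?_⟩
    rintro x y (⟨h1, h2⟩ | ⟨h1, h2, h3⟩)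
    · exact Or.inl ⟨h1.symm, h2.symm⟩
    · exact Or.inr ⟨h2, h1, h3.symm⟩
  loopless := by
    refine ⟨?_⟩
    rintro x (⟨-, h⟩ | ⟨-, -, h⟩)
    · exact H.irrefl h
    · exact G.irrefl h

lemma oir2_set_nonempty {V : Type*} [Fintype V] (G : SimpleGraph V) :
    {w | ∃ f : V → Finset (Fin 2), IsOI2RD G f ∧ w = ∑ v, (f v).card}.Nonempty := by
  refine ⟨∑ v : V, (Finset.univ : Finset (Fin 2)).card, fun _ => Finset.univ, ⟨?_, ?_⟩, rfl⟩
  · intro u hu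
    exact absurd hu (by simp [Finset.eq_empty_iff_forall_notMem])
  · intro u w hu
    exact absurd hu (by simp [Finset.eq_empty_iff_forall_notMem])

lemma exists_oir2_fun {V : Type*} [Fintype V] (G : SimpleGraph V) :
    ∃ f : V → Finset (Fin 2), IsOI2RD G f ∧ oir2 G = ∑ v, (f v).card :=
  Nat.sInf_mem (oir2_set_nonempty G)

lemma oir2_le {V : Type*} [Fintype V] (G : SimpleGraph V) (f : V → Finset (Fin 2))
    (hf : IsOI2RD G f) : oir2 G ≤ ∑ v, (f v).card :=
  Nat.sInf_le ⟨f, hf, rfl⟩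

lemma exists_beta_cover {V : Type*} [Fintype V] (G : SimpleGraph V) :
    ∃ s : Finset V, (∀ u w, G.Adj u w → u ∈ s ∨ w ∈ s) ∧ s.card = betaNum G :=
  by
  have hne : {k | ∃ s : Finset V, (∀ u w, G.Adj u w → u ∈ s ∨ w ∈ s) ∧ s.card = k}.Nonempty :=
    ⟨(Finset.univ : Finset V).card, Finset.univ, fun u _ _ => Or.inl (Finset.mem_univ u), rfl⟩
  exact Nat.sInf_mem hne

lemma betaNum_le {V : Type*} [Fintype V] (G : SimpleGraph V) (s : Finset V)
    (hs : ∀ u w, G.Adj u w → u ∈ s ∨ w ∈ s) : betaNum G ≤ s.card :=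
  Nat.sInf_le ⟨s, hs, rfl⟩

theorem oir2_rootedProd_eq_add_beta
    {α β : Type*} [Fintype α] [Fintype β]
    (G : SimpleGraph α) (H : SimpleGraph β) (v : β)
    (hG : ∃ u w, G.Adj u w)
    (hroot : ∀ f : β → Finset (Fin 2),
      IsOI2RD H f → (∑ u, (f u).card) = oir2 H → f v = ∅) :
    oir2 (rootedProd G H v) = Fintype.card α * oir2 H + betaNum G := by
  classical
  obtain ⟨f₀, hf₀, hf₀w⟩ := exists_oir2_fun H
  have hf₀v : f₀ v = ∅ := hroot f₀ hf₀ hf₀w.symm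
  obtain ⟨S, hScov, hScard⟩ := exists_beta_cover G
  -- Upper bound
  have hub : oir2 (rootedProd G H v) ≤ Fintype.card α * oir2 H + betaNum G := by
    set F : α × β → Finset (Fin 2) :=
      fun p => if p.1 ∈ S ∧ p.2 = v then ({0} : Finset (Fin 2)) else f₀ p.2 with hF
    have hFis : IsOI2RD (rootedProd G H v) F := by
      constructor
      · rintro ⟨g, h⟩ hp c
        have hcond : ¬ (g ∈ S ∧ h = v) := by
          intro hc
          simp [hF, hc] at hp
        have hfh : f₀ h = ∅ := by simpa [hF, hcond] using hp
        obtain ⟨u, hu, hcu⟩ := hf₀.1 h hfh c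
        refine ⟨(g, u), Or.inl ⟨rfl, hu⟩, ?_⟩
        have huv : u ≠ v := by
          intro he; rw [he, hf₀v] at hcu; exact absurd hcu (by simp)
        simp [hF, huv, hcu]
      · rintro ⟨g, h⟩ ⟨g', h'⟩ hp hq (⟨h1, h2⟩ | ⟨h1, h2, h3⟩)
        · have hcondp : ¬ (g ∈ S ∧ h = v) := fun hc => by simp [hF, hc] at hp
          have hcondq : ¬ (g' ∈ S ∧ h' = v) := fun hc => by simp [hF, hc] at hq
          have hfp : f₀ h = ∅ := by simpa [hF, hcondp] using hp
          have hfq : f₀ h' = ∅ := by simpa [hF, hcondq] using hq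
          exact hf₀.2 h h' hfp hfq h2
        · subst h1; subst h2
          have hgS : g ∉ S := fun hc => by simp [hF, hc] at hp
          have hg'S : g' ∉ S := fun hc => by simp [hF, hc] at hq
          rcases hScov g g' h3 with h | h
          · exact hgS h
          · exact hg'S h
    have hw : ∑ p : α × β, (F p).card = Fintype.card α * oir2 H + S.card := by
      rw [Fintype.sum_prod_type]
      have hinner : ∀ g : α, ∑ h : β, (F (g, h)).card
          = oir2 H + (if g ∈ S then 1 else 0) := by
        intro g
        by_cases hg : g ∈ S
        · have : ∀ h : β, (F (g, h)).card = (f₀ h).card + (if h = v then 1 else 0) := by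
            intro h
            by_cases hv : h = v
            · subst hv; simp [hF, hg, hf₀v]
            · simp [hF, hv]
          simp only [this, Finset.sum_add_distrib, Finset.sum_ite_eq' Finset.univ v
            (fun _ => (1 : ℕ))]
          simp [hg, hf₀w]
        · have : ∀ h : β, (F (g, h)).card = (f₀ h).card := by
            intro h; simp [hF, hg]
          simp [this, hg, hf₀w]
      simp only [hinner, Finset.sum_add_distrib, Finset.sum_const, smul_eq_mul,
        Finset.card_univ]
      congr 1
      rw [Finset.sum_ite_mem, Finset.univ_inter]
      simp
    calc oir2 (rootedProd G H v) ≤ ∑ p : α × β, (F p).card := oir2_le _ F hFis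
      _ = Fintype.card α * oir2 H + S.card := hw
      _ = Fintype.card α * oir2 H + betaNum G := by rw [hScard]
  -- Lower bound
  have hlb : Fintype.card α * oir2 H + betaNum G ≤ oir2 (rootedProd G H v) := by
    obtain ⟨F, hFis, hFw⟩ := exists_oir2_fun (rootedProd G H v)
    set T : Finset α := Finset.univ.filter (fun g => F (g, v) ≠ ∅) with hT
    have hTcov : ∀ a b, G.Adj a b → a ∈ T ∨ b ∈ T := by
      intro a b hab
      by_contra hc
      push_neg at hc
      have ha : F (a, v) = ∅ := by
        by_contra h; exact hc.1 (by simp [hT, h])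
      have hb : F (b, v) = ∅ := by
        by_contra h; exact hc.2 (by simp [hT, h])
      exact hFis.2 (a, v) (b, v) ha hb (Or.inr ⟨rfl, rfl, hab⟩)
    have hper : ∀ g : α, oir2 H + (if g ∈ T then 1 else 0) ≤ ∑ h : β, (F (g, h)).card := by
      intro g
      by_cases hg : F (g, v) = ∅
      · -- g ∉ T; show oir2 H ≤ weight of copy
        have hgT : g ∉ T := by simp [hT, hg]
        simp only [hgT, if_neg, if_false, add_zero]
        set f' : β → Finset (Fin 2) :=
          fun h => if h = v then ({0} : Finset (Fin 2)) else F (g, h) with hf'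
        have hf'is : IsOI2RD H f' := by
          constructor
          · intro h hh c
            have hhv : h ≠ v := by
              intro he; rw [he] at hh; simp [hf'] at hh
            have hFh : F (g, h) = ∅ := by simpa [hf', hhv] using hh
            obtain ⟨⟨a, b⟩, hu, hcu⟩ := hFis.1 (g, h) hFh c
            rcases hu with ⟨h1, h2⟩ | ⟨h1, _, _⟩
            · have hga : g = a := h1
              subst hga
              refine ⟨b, h2, ?_⟩
              have hu2v : b ≠ v := by
                intro he
                rw [he, hg] at hcu; exact absurd hcu (by simp)
              simpa [hf', hu2v] using hcu
            · exact absurd h1 hhv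
          · intro a b ha hb hadj
            have hav : a ≠ v := by intro he; rw [he] at ha; simp [hf'] at ha
            have hbv : b ≠ v := by intro he; rw [he] at hb; simp [hf'] at hb
            have hFa : F (g, a) = ∅ := by simpa [hf', hav] using ha
            have hFb : F (g, b) = ∅ := by simpa [hf', hbv] using hb
            exact hFis.2 (g, a) (g, b) hFa hFb (Or.inl ⟨rfl, hadj⟩)
        have hw' : ∑ h : β, (f' h).card = (∑ h : β, (F (g, h)).card) + 1 := by
          have : ∀ h : β, (f' h).card = (F (g, h)).card + (if h = v then 1 else 0) := by
            intro h
            by_cases hv : h = v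
            · subst hv; simp [hf', hg]
            · simp [hf', hv]
          simp only [this, Finset.sum_add_distrib, Finset.sum_ite_eq' Finset.univ v
            (fun _ => (1 : ℕ))]
          simp
        have hle : oir2 H ≤ (∑ h : β, (F (g, h)).card) + 1 := by
          rw [← hw']; exact oir2_le H f' hf'is
        by_contra hcon
        push_neg at hcon
        have heq : (∑ h : β, (F (g, h)).card) + 1 = oir2 H := le_antisymm hcon hle
        have := hroot f' hf'is (by rw [hw', heq])
        simp [hf'] at this
      · have hgT : g ∈ T := by simp [hT, hg]
        simp only [hgT, if_pos]
        set f' : β → Finset (Fin 2) := fun h => F (g, h) with hf'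
        have hf'is : IsOI2RD H f' := by
          constructor
          · intro h hh c
            have hhv : h ≠ v := by intro he; rw [he] at hh; exact hg hh
            obtain ⟨⟨a, b⟩, hu, hcu⟩ := hFis.1 (g, h) hh c
            rcases hu with ⟨h1, h2⟩ | ⟨h1, _, _⟩
            · have hga : g = a := h1
              subst hga
              exact ⟨b, h2, hcu⟩
            · exact absurd h1 hhv
          · intro a b ha hb hadj
            exact hFis.2 (g, a) (g, b) ha hb (Or.inl ⟨rfl, hadj⟩)
        have hle : oir2 H ≤ ∑ h : β, (F (g, h)).card := oir2_le H f' hf'is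
        rcases lt_or_eq_of_le hle with h | h
        · omega
        · exact absurd (hroot f' hf'is h.symm) hg
    have hsum : Fintype.card α * oir2 H + T.card ≤ ∑ p : α × β, (F p).card := by
      rw [Fintype.sum_prod_type]
      calc Fintype.card α * oir2 H + T.card
          = ∑ g : α, (oir2 H + (if g ∈ T then 1 else 0)) := by
            rw [Finset.sum_add_distrib, Finset.sum_const, smul_eq_mul, Finset.card_univ]
            congr 1
            rw [Finset.sum_ite_mem, Finset.univ_inter]
            simp
        _ ≤ ∑ g : α, ∑ h : β, (F (g, h)).card := Finset.sum_le_sum (fun g _ => hper g)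
    have hbT : betaNum G ≤ T.card := betaNum_le G T hTcov
    rw [hFw, Fintype.sum_prod_type]
    calc Fintype.card α * oir2 H + betaNum G
        ≤ Fintype.card α * oir2 H + T.card := Nat.add_le_add_left hbT _
      _ ≤ ∑ g : α, ∑ h : β, (F (g, h)).card := by
          rw [Fintype.sum_prod_type] at hsum; exact hsum
  exact le_antisymm hub hlb
end

section
/- If G is a graph of order n with no isolated vertices, and H is a graph of order at least 2 with no isolated vertices, then γ_oir2(G ⊙ H) = n(β(H) + 1), where β(H) is the vertex cover number of H. -/
/-- The corona `G ⊙ H`: the vertex `(a, none)` plays the role of the vertex `a`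
of `G`, and `(a, some h)` is the vertex `h` of the copy `H_a` of `H`; each
vertex `a` of `G` is joined to every vertex of `H_a`. -/
def corona {α β : Type*} (G : SimpleGraph α) (H : SimpleGraph β) :
    SimpleGraph (α × Option β) where
  Adj x y :=
    (x.2 = none ∧ y.2 = none ∧ G.Adj x.1 y.1) ∨
    (x.1 = y.1 ∧ ∃ h h', x.2 = some h ∧ y.2 = some h' ∧ H.Adj h h') ∨
    (x.1 = y.1 ∧ x.2 = none ∧ ∃ h, y.2 = some h) ∨
    (x.1 = y.1 ∧ y.2 = none ∧ ∃ h, x.2 = some h)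
  symm := by
    constructor
    rintro x y (⟨h1, h2, h3⟩ | ⟨h1, h, h', hx, hy, hadj⟩ | ⟨h1, h2, h3⟩ | ⟨h1, h2, h3⟩)
    · exact Or.inl ⟨h2, h1, h3.symm⟩
    · exact Or.inr (Or.inl ⟨h1.symm, h', h, hy, hx, hadj.symm⟩)
    · exact Or.inr (Or.inr (Or.inr ⟨h1.symm, h2, h3⟩))
    · exact Or.inr (Or.inr (Or.inl ⟨h1.symm, h2, h3⟩))
  loopless := by
    constructor
    rintro x (⟨-, -, h⟩ | ⟨-, h, h', hx, hy, hadj⟩ | ⟨-, h2, h, h3⟩ | ⟨-, h2, h, h3⟩)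
    · exact G.irrefl h
    · rw [hx] at hy
      injection hy with e
      rw [e] at hadj
      exact H.irrefl hadj
    · rw [h2] at h3
      exact nomatch h3
    · rw [h2] at h3
      exact nomatch h3

/-- If `G` has order `n` and no isolated vertices, and `H` has order at least `2`
and no isolated vertices, then `γ_oir2(G ⊙ H) = n(β(H) + 1)`. -/
theorem oir2_corona_no_isolated
    {α β : Type*} [Fintype α] [Fintype β]
    (G : SimpleGraph α) (H : SimpleGraph β)
    (hG : ∀ v, ∃ u, G.Adj v u) (hcard : 2 ≤ Fintype.card β)
    (hH : ∀ v, ∃ u, H.Adj v u) :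
    oir2 (corona G H) = Fintype.card α * (betaNum H + 1) := by
  classical
  -- a minimum vertex cover of H
  have hbne : {k | ∃ s : Finset β, (∀ u w, H.Adj u w → u ∈ s ∨ w ∈ s) ∧ s.card = k}.Nonempty :=
    ⟨(Finset.univ : Finset β).card, Finset.univ, fun u w _ => Or.inl (Finset.mem_univ u), rfl⟩
  obtain ⟨S, hScov, hScard⟩ := Nat.sInf_mem hbne
  have hbeta_le : ∀ (s : Finset β), (∀ u w, H.Adj u w → u ∈ s ∨ w ∈ s) → betaNum H ≤ s.card :=
    fun s hs => Nat.sInf_le ⟨s, hs, rfl⟩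
  -- betaNum H + 1 ≤ card β
  have hbeta_lt : betaNum H + 1 ≤ Fintype.card β := by
    obtain ⟨v⟩ : Nonempty β := Fintype.card_pos_iff.mp (by omega)
    have hc : ∀ u w, H.Adj u w → u ∈ Finset.univ.erase v ∨ w ∈ Finset.univ.erase v := by
      intro u w huw
      by_cases hu : u = v
      · right
        exact Finset.mem_erase.mpr ⟨by rintro rfl; exact H.irrefl (hu ▸ huw), Finset.mem_univ _⟩
      · exact Or.inl (Finset.mem_erase.mpr ⟨hu, Finset.mem_univ _⟩)
    have := hbeta_le _ hc
    rw [Finset.card_erase_of_mem (Finset.mem_univ v), Finset.card_univ] at this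
    omega
  -- the explicit OI2RD function
  set f0 : α × Option β → Finset (Fin 2) := fun x =>
    Option.elim x.2 {0} (fun h => if h ∈ S then {1} else ∅) with hf0
  have hf0dom : IsOI2RD (corona G H) f0 := by
    constructor
    · rintro ⟨a, o⟩ hv c
      match o with
      | none => simp [hf0] at hv
      | some h =>
        have hhS : h ∉ S := by
          by_contra hmem
          simp [hf0, hmem] at hv
        fin_cases c
        · refine ⟨(a, none), ?_, ?_⟩
          · exact Or.inr (Or.inr (Or.inr ⟨rfl, rfl, h, rfl⟩))
          · simp [hf0]
        · obtain ⟨h', hh'⟩ := hH h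
          have hh'S : h' ∈ S := by
            rcases hScov h h' hh' with h1 | h1
            · exact absurd h1 hhS
            · exact h1
          refine ⟨(a, some h'), ?_, ?_⟩
          · exact Or.inr (Or.inl ⟨rfl, h, h', rfl, rfl, hh'⟩)
          · simp [hf0, hh'S]
    · rintro ⟨a, o⟩ ⟨a', o'⟩ hu hw hadj
      match o, o' with
      | none, _ => simp [hf0] at hu
      | some h, none => simp [hf0] at hw
      | some h, some h' =>
        have hhS : h ∉ S := by by_contra hmem; simp [hf0, hmem] at hu
        have hh'S : h' ∉ S := by by_contra hmem; simp [hf0, hmem] at hw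
        rcases hadj with ⟨e, _⟩ | ⟨_, x, y, hx, hy, hxy⟩ | ⟨_, e, _⟩ | ⟨_, e, _⟩
        · exact absurd e (by simp)
        · injection hx with ex; injection hy with ey
          subst ex; subst ey
          rcases hScov _ _ hxy with h1 | h1
          · exact hhS h1
          · exact hh'S h1
        · exact absurd e (by simp)
        · exact absurd e (by simp)
  have hf0w : ∑ v, (f0 v).card = Fintype.card α * (betaNum H + 1) := by
    rw [Fintype.sum_prod_type]
    have hinner : ∀ a : α, ∑ o : Option β, (f0 (a, o)).card = betaNum H + 1 := by
      intro a
      rw [Fintype.sum_option]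
      have hScard' : S.card = betaNum H := hScard
      have h1 : (f0 (a, none)).card = 1 := by simp [hf0]
      have h2 : ∑ h : β, (f0 (a, some h)).card = betaNum H := by
        simp only [hf0, Option.elim, apply_ite Finset.card, Finset.card_singleton,
          Finset.card_empty]
        rw [Finset.sum_ite_mem, Finset.univ_inter, ← Finset.card_eq_sum_ones, hScard']
      rw [h1, h2, Nat.add_comm]
    simp only [hinner]
    rw [Finset.sum_const, Finset.card_univ, smul_eq_mul]
  -- the set defining oir2 is nonempty, with element n(β+1)
  have hmem : Fintype.card α * (betaNum H + 1) ∈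
      {w | ∃ f : α × Option β → Finset (Fin 2), IsOI2RD (corona G H) f ∧ w = ∑ v, (f v).card} :=
    ⟨f0, hf0dom, hf0w.symm⟩
  -- lower bound
  have hlow : ∀ w ∈ {w | ∃ f : α × Option β → Finset (Fin 2),
      IsOI2RD (corona G H) f ∧ w = ∑ v, (f v).card}, Fintype.card α * (betaNum H + 1) ≤ w := by
    rintro w ⟨f, ⟨hdom, hind⟩, rfl⟩
    rw [Fintype.sum_prod_type]
    have hper : ∀ a : α, betaNum H + 1 ≤ ∑ o : Option β, (f (a, o)).card := by
      intro a
      rw [Fintype.sum_option]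
      by_cases hnone : f (a, none) = ∅
      · -- all leaf vertices are nonempty
        have hall : ∀ h : β, f (a, some h) ≠ ∅ := by
          intro h hc
          exact hind (a, none) (a, some h) hnone hc
            (Or.inr (Or.inr (Or.inl ⟨rfl, rfl, h, rfl⟩)))
        have : Fintype.card β ≤ ∑ h : β, (f (a, some h)).card := by
          rw [← Finset.card_univ, Finset.card_eq_sum_ones]
          exact Finset.sum_le_sum fun h _ =>
            Finset.card_pos.mpr (Finset.nonempty_iff_ne_empty.mpr (hall h))
        omega
      · -- the support within the copy is a vertex cover
        have h1 : 1 ≤ (f (a, none)).card :=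
          Finset.card_pos.mpr (Finset.nonempty_iff_ne_empty.mpr hnone)
        set T := Finset.univ.filter (fun h : β => f (a, some h) ≠ ∅) with hT
        have hTcov : ∀ u w, H.Adj u w → u ∈ T ∨ w ∈ T := by
          intro u v huv
          by_contra hc
          push_neg at hc
          have hu : f (a, some u) = ∅ := by
            by_contra h; exact hc.1 (Finset.mem_filter.mpr ⟨Finset.mem_univ _, h⟩)
          have hv : f (a, some v) = ∅ := by
            by_contra h; exact hc.2 (Finset.mem_filter.mpr ⟨Finset.mem_univ _, h⟩)
          exact hind (a, some u) (a, some v) hu hv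
            (Or.inr (Or.inl ⟨rfl, u, v, rfl, rfl, huv⟩))
        have hTle : betaNum H ≤ T.card := hbeta_le T hTcov
        have hTsum : T.card ≤ ∑ h : β, (f (a, some h)).card := by
          rw [Finset.card_eq_sum_ones]
          calc ∑ _h ∈ T, 1 ≤ ∑ h ∈ T, (f (a, some h)).card :=
                Finset.sum_le_sum fun h hh =>
                  Finset.card_pos.mpr (Finset.nonempty_iff_ne_empty.mpr
                    ((Finset.mem_filter.mp hh).2))
            _ ≤ ∑ h : β, (f (a, some h)).card :=
                Finset.sum_le_sum_of_subset (Finset.subset_univ T)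
        omega
    calc Fintype.card α * (betaNum H + 1)
        = ∑ _a : α, (betaNum H + 1) := by
          rw [Finset.sum_const, Finset.card_univ, smul_eq_mul]
      _ ≤ ∑ a : α, ∑ o : Option β, (f (a, o)).card := Finset.sum_le_sum fun a _ => hper a
  exact le_antisymm (Nat.sInf_le hmem) (le_csInf ⟨_, hmem⟩ hlow)
end
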